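/- Every eigenfunction φ ∈ 𝓛^⊥ of U satisfies Uφ = -Sφ; consequently, if λ is an eigenvalue of U restricted to 𝓛^⊥ then λ ∈ {±1}, with ker(I - U|_{𝓛^⊥}) = ker(d_A) ∩ ker(I + S) and ker(I + U|_{𝓛^⊥}) = ker(d_A) ∩ ker(I - S). -/

import Mathlib

/-! On `ker dA` the operator `2 dA* dA - 1` acts as `-1`, so `U = -S` there. An eigenvector
equation `U φ = λ φ` thus says `S φ = -λ φ`, and since `S² = 1` this forces `λ = ±1`; the two
eigenspaces are the `∓1` eigenspaces of `S` inside `ker dA`, which also lie in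
`ker dB = ker (dA S)`. -/

open ContinuousLinearMap

theorem IsSelfAdjoint.mul_self_eq_one_of_mem_unitary {R : Type*} [Monoid R] [StarMul R] {u : R}
    (hu : IsSelfAdjoint u) (hmem : u ∈ unitary R) : u * u = 1 := by
  simpa only [hu.star_eq] using Unitary.star_mul_self_of_mem hmem

theorem eq_one_or_eq_neg_one_of_apply_apply_eq_self {K M : Type*} [Field K] [AddCommGroup M]
    [Module K M] {f : M →ₗ[K] M} (hf : ∀ x, f (f x) = x) {x : M} (hx : x ≠ 0) {μ : K}
    (hμ : f x = μ • x) : μ = 1 ∨ μ = -1 := by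
  have hsq : (μ * μ - 1) • x = 0 := by
    rw [sub_smul, mul_smul, ← hμ, ← map_smul, ← hμ, hf, one_smul, sub_self]
  exact mul_self_eq_one_iff.mp (sub_eq_zero.mp ((smul_eq_zero.mp hsq).resolve_right hx))

theorem comp_smul_sub_one_apply_of_apply_eq_zero {R E : Type*} [CommRing R] [AddCommGroup E]
    [TopologicalSpace E] [Module R E] [IsTopologicalAddGroup E] [ContinuousConstSMul R E]
    (S P : E →L[R] E) (c : R) {φ : E} (hφ : P φ = 0) : (S ∘L (c • P - 1)) φ = -(S φ) := by
  simp [hφ]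

theorem stmt19_general {K₁ K₂ : Type*}
    [NormedAddCommGroup K₁] [InnerProductSpace ℂ K₁] [FiniteDimensional ℂ K₁]
    [NormedAddCommGroup K₂] [InnerProductSpace ℂ K₂] [FiniteDimensional ℂ K₂]
    (S : K₂ →L[ℂ] K₂) (hS : IsSelfAdjoint S) (hSu : S ∈ unitary (K₂ →L[ℂ] K₂))
    (dA : K₂ →L[ℂ] K₁)
    (dB : K₂ →L[ℂ] K₁) (hdB : dB = dA ∘L S)
    (U : K₂ →L[ℂ] K₂) (hU : U = S ∘L ((2:ℂ) • (adjoint dA ∘L dA) - 1)) :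
    (∀ φ : K₂, dA φ = 0 → dB φ = 0 → ∀ lam : ℂ, φ ≠ 0 → U φ = lam • φ →
        U φ = -(S φ)) ∧
    (∀ lam : ℂ, (∃ φ : K₂, dA φ = 0 ∧ dB φ = 0 ∧ φ ≠ 0 ∧ U φ = lam • φ) →
        lam = 1 ∨ lam = -1) ∧
    {φ : K₂ | (dA φ = 0 ∧ dB φ = 0) ∧ U φ = φ}
      = {φ : K₂ | dA φ = 0 ∧ φ + S φ = 0} ∧
    {φ : K₂ | (dA φ = 0 ∧ dB φ = 0) ∧ U φ = -φ}
      = {φ : K₂ | dA φ = 0 ∧ φ - S φ = 0} := by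
  have hSS (x : K₂) : S (S x) = x := by
    change (S * S) x = x
    rw [hS.mul_self_eq_one_of_mem_unitary hSu, one_apply_eq_self]
  have hUφ (φ : K₂) (hφ : dA φ = 0) : U φ = -(S φ) := by
    rw [hU]
    exact comp_smul_sub_one_apply_of_apply_eq_zero _ _ _ (by rw [comp_apply, hφ, map_zero])
  refine ⟨fun φ hA _ _ _ _ => hUφ φ hA, ?_, ?_, ?_⟩
  · rintro lam ⟨φ, hA, -, hφ, hlam⟩
    have hSφ : S φ = (-lam) • φ := by rw [neg_smul, ← hlam, hUφ φ hA, neg_neg]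
    rcases eq_one_or_eq_neg_one_of_apply_apply_eq_self (f := (S : K₂ →ₗ[ℂ] K₂)) hSS hφ hSφ
      with h | h
    · exact Or.inr (neg_eq_iff_eq_neg.mp h)
    · exact Or.inl (neg_inj.mp h)
  · ext φ
    simp only [Set.mem_ofPred_eq, hdB, comp_apply]
    constructor
    · rintro ⟨⟨hA, -⟩, hφ⟩
      exact ⟨hA, eq_neg_iff_add_eq_zero.mp (by rw [← hUφ φ hA, hφ])⟩
    · rintro ⟨hA, hφ⟩
      have hSφ : S φ = -φ := eq_neg_of_add_eq_zero_right hφ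
      exact ⟨⟨hA, by rw [hSφ, map_neg, hA, neg_zero]⟩, by rw [hUφ φ hA, hSφ, neg_neg]⟩
  · ext φ
    simp only [Set.mem_ofPred_eq, hdB, comp_apply]
    constructor
    · rintro ⟨⟨hA, -⟩, hφ⟩
      exact ⟨hA, sub_eq_zero.mpr (neg_inj.mp (by rw [← hUφ φ hA, hφ]))⟩
    · rintro ⟨hA, hφ⟩
      have hSφ : S φ = φ := (sub_eq_zero.mp hφ).symm
      exact ⟨⟨hA, by rw [hSφ, hA]⟩, by rw [hUφ φ hA, hSφ]⟩

theorem stmt19 {K₁ K₂ : Type*}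
    [NormedAddCommGroup K₁] [InnerProductSpace ℂ K₁] [FiniteDimensional ℂ K₁]
    [NormedAddCommGroup K₂] [InnerProductSpace ℂ K₂] [FiniteDimensional ℂ K₂]
    (S : K₂ →L[ℂ] K₂) (hS : IsSelfAdjoint S) (hSu : S ∈ unitary (K₂ →L[ℂ] K₂))
    (dA : K₂ →L[ℂ] K₁) (h : dA ∘L adjoint dA = 1)
    (dB : K₂ →L[ℂ] K₁) (hdB : dB = dA ∘L S)
    (U : K₂ →L[ℂ] K₂) (hU : U = S ∘L ((2:ℂ) • (adjoint dA ∘L dA) - 1)) :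
    (∀ φ : K₂, dA φ = 0 → dB φ = 0 → ∀ lam : ℂ, φ ≠ 0 → U φ = lam • φ →
        U φ = -(S φ)) ∧
    (∀ lam : ℂ, (∃ φ : K₂, dA φ = 0 ∧ dB φ = 0 ∧ φ ≠ 0 ∧ U φ = lam • φ) →
        lam = 1 ∨ lam = -1) ∧
    {φ : K₂ | (dA φ = 0 ∧ dB φ = 0) ∧ U φ = φ}
      = {φ : K₂ | dA φ = 0 ∧ φ + S φ = 0} ∧
    {φ : K₂ | (dA φ = 0 ∧ dB φ = 0) ∧ U φ = -φ}
      = {φ : K₂ | dA φ = 0 ∧ φ - S φ = 0} :=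
  stmt19_general S hS hSu dA dB hdB U hU
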